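/- arXiv:2206.14131 — 4 statements merged into one kernel-verified Lean document; each statement's English description precedes it below -/
import Mathlib

section
/- Let M ≥ 2, let 𝒜 be a nonempty proper subset of ℤ_M² with limiting Cantor set X ⊆ 𝕋². Suppose a, b are coprime integers, not both zero, with max(|a|, |b|) > M. Then there is no p ∈ 𝕋² such that the line ℝ(a,b) + p is contained in X. -/
/-!
Let `z ∉ 𝒜` be a missing digit pair. A point of `X` can lie in the open first-level cell
`(z₁/M, (z₁+1)/M) × (z₂/M, (z₂+1)/M)` only if its first digit pair is `z` (closed cells would
not do, because of expansions such as `0.0999… = 0.1`), so `X` misses this open square of side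
`1/M`. Say `|a| > M` (the case `|b| > M` is symmetric). Over a fixed first coordinate `x`, the
line `ℝ(a, b) + p` passes through the points `(x, s + (k b + m a)/a)` with `k, m ∈ ℤ`; since `a`
and `b` are coprime these are the points `(x, s + n/a)`, `n ∈ ℤ`, which are `1/|a|`-dense, so the
line enters the open square.
-/

noncomputable section

/-- The two-dimensional torus `𝕋² = (ℝ/ℤ)²`. -/
abbrev T2 := AddCircle (1 : ℝ) × AddCircle (1 : ℝ)

/-- The geodesic line (coset) `ℝv + p ⊆ 𝕋²`. -/
def lineT2 (v : ℝ × ℝ) (p : T2) : Set T2 :=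
  {q | ∃ t : ℝ, q = (((t * v.1 : ℝ) : AddCircle (1 : ℝ)) + p.1,
                     ((t * v.2 : ℝ) : AddCircle (1 : ℝ)) + p.2)}

/-- The limiting Cantor set in `𝕋²` generated by the alphabet `A ⊆ ℤ_M²`. -/
def cantorSet2 (M : ℕ) (A : Set (ZMod M × ZMod M)) : Set T2 :=
  {p | ∃ d : ℕ → ZMod M × ZMod M, (∀ j, d j ∈ A) ∧
    p = (((∑' j : ℕ, ((d j).1.val : ℝ) / (M : ℝ) ^ (j + 1) : ℝ) : AddCircle (1 : ℝ)),
         ((∑' j : ℕ, ((d j).2.val : ℝ) / (M : ℝ) ^ (j + 1) : ℝ) : AddCircle (1 : ℝ)))}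

open Set

theorem AddCircle.coe_eq_coe_of_sub_eq_intCast {𝕜 : Type*} [Ring 𝕜] {x y : 𝕜} (k : ℤ)
    (h : x - y = k) : (x : AddCircle (1 : 𝕜)) = y := by
  rw [← sub_eq_zero, ← AddCircle.coe_sub, AddCircle.coe_eq_zero_iff]
  exact ⟨k, by simp [h]⟩

theorem AddCircle.eq_of_coe_eq_of_abs_sub_lt {𝕜 : Type*} [Ring 𝕜] [LinearOrder 𝕜]
    [IsStrictOrderedRing 𝕜] {p x y : 𝕜} (hxy : |x - y| < p) (h : (x : AddCircle p) = y) :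
    x = y := by
  obtain ⟨n, hn⟩ := (AddCircle.coe_eq_zero_iff p (x := x - y)).mp
    (by rw [AddCircle.coe_sub, h, sub_self])
  have hp : 0 < p := (abs_nonneg _).trans_lt hxy
  rw [← hn, zsmul_eq_mul, abs_mul, abs_of_pos hp, mul_lt_iff_lt_one_left hp, ← Int.cast_abs]
    at hxy
  obtain rfl : n = 0 := Int.abs_lt_one_iff.mp (by exact_mod_cast hxy)
  rw [zero_smul] at hn
  exact sub_eq_zero.mp hn.symm

namespace Real

theorem ofDigits_mem_Icc_head {b : ℕ} (a : ℕ → Fin b) :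
    ofDigits a ∈ Icc ((a 0 : ℝ) / b) ((a 0 + 1 : ℝ) / b) := by
  have hb : (0 : ℝ) < (b : ℝ)⁻¹ := inv_pos.mpr (by exact_mod_cast (a 0).pos)
  have h0 := ofDigits_nonneg (fun i ↦ a (i + 1))
  have h1 := ofDigits_le_one (fun i ↦ a (i + 1))
  rw [ofDigits_eq_sum_add_ofDigits a 1]
  simp only [Finset.sum_range_one, ofDigitsTerm, zero_add, pow_one, div_eq_mul_inv, add_mul,
    one_mul]
  constructor <;> nlinarith

theorem head_eq_of_coe_ofDigits_eq {b : ℕ} (a : ℕ → Fin b) (c : Fin b) {x : ℝ}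
    (hx : x ∈ Ioo ((c : ℝ) / b) ((c + 1 : ℝ) / b))
    (h : (ofDigits a : AddCircle (1 : ℝ)) = x) : a 0 = c := by
  have hb : (0 : ℝ) < b := by exact_mod_cast c.pos
  have hcb : (c + 1 : ℝ) ≤ b := by exact_mod_cast c.isLt
  have hx0 : 0 < x := lt_of_le_of_lt (by positivity) hx.1
  have hx1 : x < 1 := hx.2.trans_le ((div_le_one hb).mpr hcb)
  have hax : ofDigits a = x := by
    refine AddCircle.eq_of_coe_eq_of_abs_sub_lt (abs_sub_lt_iff.mpr ⟨?_, ?_⟩) h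
    · linarith [ofDigits_le_one a]
    · linarith [ofDigits_nonneg a]
  obtain ⟨hlo, hhi⟩ := ofDigits_mem_Icc_head a
  rw [hax] at hlo hhi
  have h1 : (a 0 : ℝ) < c + 1 := (div_lt_div_iff_of_pos_right hb).mp (hlo.trans_lt hx.2)
  have h2 : (c : ℝ) < a 0 + 1 := (div_lt_div_iff_of_pos_right hb).mp (hx.1.trans_le hhi)
  have h1' : (a 0 : ℕ) < c + 1 := by exact_mod_cast h1
  have h2' : (c : ℕ) < a 0 + 1 := by exact_mod_cast h2
  exact Fin.ext (by omega)

end Real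

theorem mem_of_mem_cantorSet2 {M : ℕ} [NeZero M] {A : Set (ZMod M × ZMod M)}
    (z : ZMod M × ZMod M) {x y : ℝ}
    (hx : x ∈ Ioo ((z.1.val : ℝ) / M) ((z.1.val + 1 : ℝ) / M))
    (hy : y ∈ Ioo ((z.2.val : ℝ) / M) ((z.2.val + 1 : ℝ) / M))
    (hxy : ((x : AddCircle (1 : ℝ)), (y : AddCircle (1 : ℝ))) ∈ cantorSet2 M A) :
    z ∈ A := by
  obtain ⟨d, hdA, hd⟩ := hxy
  obtain ⟨h1, h2⟩ := Prod.ext_iff.mp hd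
  have e1 := Real.head_eq_of_coe_ofDigits_eq (fun j ↦ ⟨(d j).1.val, (d j).1.val_lt⟩)
    ⟨z.1.val, z.1.val_lt⟩ hx h1.symm
  have e2 := Real.head_eq_of_coe_ofDigits_eq (fun j ↦ ⟨(d j).2.val, (d j).2.val_lt⟩)
    ⟨z.2.val, z.2.val_lt⟩ hy h2.symm
  have hd0 : d 0 = z :=
    Prod.ext (ZMod.val_injective M (congrArg Fin.val e1))
      (ZMod.val_injective M (congrArg Fin.val e2))
  exact hd0 ▸ hdA 0

theorem exists_add_intCast_div_mem_Ioo {𝕜 : Type*} [Field 𝕜] [LinearOrder 𝕜]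
    [IsStrictOrderedRing 𝕜] [Archimedean 𝕜] {a ε : 𝕜} (h : 1 < ε * |a|) (s u : 𝕜) :
    ∃ n : ℤ, s + n / a ∈ Ioo u (u + ε) := by
  have ha : 0 < |a| := abs_pos.mpr (by rintro rfl; norm_num at h)
  obtain ⟨m, hm, -⟩ := existsUnique_add_zsmul_mem_Ioc (inv_pos.mpr ha) s u
  have hε : |a|⁻¹ < ε := by rwa [inv_lt_iff_one_lt_mul₀ ha]
  obtain ⟨n, hn⟩ : ∃ n : ℤ, (n : 𝕜) / a = m • |a|⁻¹ := by
    rcases abs_choice a with h | h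
    · exact ⟨m, by rw [h, zsmul_eq_mul, div_eq_mul_inv]⟩
    · exact ⟨-m, by rw [h, zsmul_eq_mul, inv_neg]; push_cast; ring⟩
  exact ⟨n, hn ▸ ⟨hm.1, hm.2.trans_lt (by linarith)⟩⟩

theorem exists_mem_lineT2_of_one_lt_mul_abs {a b : ℤ} (hab : IsCoprime a b) {ε : ℝ}
    (h : 1 < ε * |(a : ℝ)|) (p : T2) (x u : ℝ) :
    ∃ y ∈ Ioo u (u + ε),
      ((x : AddCircle (1 : ℝ)), (y : AddCircle (1 : ℝ))) ∈ lineT2 (a, b) p := by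
  obtain ⟨p₁, p₂⟩ := p
  obtain ⟨P₁, rfl⟩ := QuotientAddGroup.mk_surjective p₁
  obtain ⟨P₂, rfl⟩ := QuotientAddGroup.mk_surjective p₂
  obtain ⟨u', v', huv⟩ := hab
  obtain ⟨n, hn⟩ := exists_add_intCast_div_mem_Ioo h ((x - P₁) * b / a + P₂) u
  have ha : (a : ℝ) ≠ 0 := by rintro h0; norm_num [h0] at h
  refine ⟨_, hn, (x - P₁ + n * v') / a, Prod.ext ?_ ?_⟩
  · rw [← AddCircle.coe_add]
    exact AddCircle.coe_eq_coe_of_sub_eq_intCast (-(n * v')) (by push_cast; field_simp; ring)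
  · rw [← AddCircle.coe_add]
    refine AddCircle.coe_eq_coe_of_sub_eq_intCast (n * u') ?_
    have huv' : (u' : ℝ) * a + v' * b = 1 := by exact_mod_cast huv
    push_cast
    field_simp
    linear_combination (-n : ℝ) * huv'

theorem swap_mem_lineT2_swap {v : ℝ × ℝ} {p q : T2} :
    q.swap ∈ lineT2 v.swap p.swap ↔ q ∈ lineT2 v p := by
  simp only [lineT2, mem_ofPred_eq, Prod.ext_iff, Prod.fst_swap, Prod.snd_swap, and_comm]

theorem exists_mem_lineT2_of_one_lt_mul_max {a b : ℤ} (hab : IsCoprime a b) {ε : ℝ}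
    (h : 1 < ε * max |(a : ℝ)| |(b : ℝ)|) (p : T2) (u₁ u₂ : ℝ) :
    ∃ x ∈ Ioo u₁ (u₁ + ε), ∃ y ∈ Ioo u₂ (u₂ + ε),
      ((x : AddCircle (1 : ℝ)), (y : AddCircle (1 : ℝ))) ∈ lineT2 (a, b) p := by
  have hε : 0 < ε := pos_of_mul_pos_left (one_pos.trans h) (le_max_of_le_left (abs_nonneg _))
  have hmid (u : ℝ) : u + ε / 2 ∈ Ioo u (u + ε) := ⟨by linarith, by linarith⟩
  rcases le_total |(b : ℝ)| |(a : ℝ)| with hba | hab'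
  · rw [max_eq_left hba] at h
    obtain ⟨y, hy, hline⟩ := exists_mem_lineT2_of_one_lt_mul_abs hab h p (u₁ + ε / 2) u₂
    exact ⟨_, hmid u₁, y, hy, hline⟩
  · rw [max_eq_right hab'] at h
    obtain ⟨x, hx, hline⟩ :=
      exists_mem_lineT2_of_one_lt_mul_abs hab.symm h p.swap (u₂ + ε / 2) u₁
    exact ⟨x, hx, _, hmid u₂, swap_mem_lineT2_swap.mp hline⟩

theorem no_line_of_large_slope_general (M : ℕ) (hM : 2 ≤ M)
    (A : Set (ZMod M × ZMod M)) (hAproper : A ≠ Set.univ)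
    (a b : ℤ) (hab : Int.gcd a b = 1)
    (hbig : M < max a.natAbs b.natAbs) :
    ¬ ∃ p : T2, lineT2 ((a : ℝ), (b : ℝ)) p ⊆ cantorSet2 M A := by
  have : NeZero M := ⟨by omega⟩
  rintro ⟨p, hline⟩
  obtain ⟨z, hz⟩ := (Set.ne_univ_iff_exists_notMem A).mp hAproper
  have hslope : 1 < 1 / (M : ℝ) * max |(a : ℝ)| |(b : ℝ)| := by
    rw [one_div_mul_eq_div, one_lt_div (by positivity)]
    have hcast := (Nat.cast_lt (α := ℝ)).mpr hbig
    rwa [Nat.cast_max, Nat.cast_natAbs, Nat.cast_natAbs, Int.cast_abs, Int.cast_abs] at hcast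
  obtain ⟨x, hx, y, hy, hxy⟩ := exists_mem_lineT2_of_one_lt_mul_max
    (Int.isCoprime_iff_gcd_eq_one.mpr hab) hslope p (z.1.val / M) (z.2.val / M)
  exact hz (mem_of_mem_cantorSet2 z (by rwa [add_div]) (by rwa [add_div]) (hline hxy))

/-- If `a, b` are coprime integers (not both zero) with `max(|a|, |b|) > M`, then no
line in direction `(a, b)` is contained in the limiting Cantor set of an alphabet
`𝒜 ⊊ ℤ_M²`. -/
theorem no_line_of_large_slope (M : ℕ) (hM : 2 ≤ M)
    (A : Set (ZMod M × ZMod M)) (hAne : A.Nonempty) (hAproper : A ≠ Set.univ)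
    (a b : ℤ) (hab : Int.gcd a b = 1) (hne : ¬(a = 0 ∧ b = 0))
    (hbig : M < max a.natAbs b.natAbs) :
    ¬ ∃ p : T2, lineT2 ((a : ℝ), (b : ℝ)) p ⊆ cantorSet2 M A :=
  no_line_of_large_slope_general M hM A hAproper a b hab hbig
end
end

section
/- Let N ≥ 1, let a ≤ b be integers with b − a ≤ N, and let I ⊆ ℤ_N be the image of {a, a+1, …, b−1} under reduction mod N. Suppose f : ℤ_N → ℂ is nonzero and its Fourier transform satisfies 𝓕f(ξ) = 0 for all ξ ∈ I. Then |supp f| > b − a. -/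
noncomputable section

/-- The unitary discrete Fourier transform on `ℤ_N`, as a map on functions:
`𝓕f(ξ) = N^{-1/2} ∑_{x ∈ ℤ_N} f(x) e^{-2πiξx/N}`. -/
def dftFun (N : ℕ) (f : ZMod N → ℂ) (ξ : ZMod N) : ℂ :=
  ((Real.sqrt N)⁻¹ : ℝ) * ∑ x ∈ Finset.range N,
    f (x : ZMod N) * Complex.exp (-(2 * Real.pi * Complex.I) * ((ξ.val : ℝ) * (x : ℝ)) / N)

open Complex in
/-- **1D support proposition.** If `f : ℤ_N → ℂ` is nonzero and its Fourier
transform vanishes on the (mod N image of the) integer interval `[a, b)` with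
`b - a ≤ N`, then `|supp f| > b - a`. -/
theorem support_gt_of_dft_vanishes_on_interval (N : ℕ) (hN : 1 ≤ N)
    (a b : ℤ) (hab : a ≤ b) (hlen : b - a ≤ (N : ℤ))
    (f : ZMod N → ℂ) (hf : f ≠ 0)
    (hvanish : ∀ ξ : ZMod N, (∃ m : ℤ, a ≤ m ∧ m < b ∧ ξ = (m : ZMod N)) →
      dftFun N f ξ = 0) :
    b - a < ((Function.support f).ncard : ℤ) := by
  classical
  haveI : NeZero N := ⟨by omega⟩
  by_contra hcon
  push_neg at hcon
  set w : ℂ := Complex.exp (-(2 * Real.pi * Complex.I) / N) with hw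
  have hNC : (N : ℂ) ≠ 0 := by exact_mod_cast (by omega : (N:ℤ) ≠ 0)
  have hw_ne : w ≠ 0 := Complex.exp_ne_zero _
  have hprim : IsPrimitiveRoot w N := by
    have h := Complex.isPrimitiveRoot_exp N (by omega)
    have : w = (Complex.exp (2 * Real.pi * Complex.I / N))⁻¹ := by
      rw [hw, ← Complex.exp_neg]; ring_nf
    rw [this]
    exact h.inv
  -- support as a Finset
  set S : Finset (ZMod N) := Finset.univ.filter (fun y => f y ≠ 0) with hS
  have hSsupp : Function.support f = ↑S := by
    ext y; simp [hS, Function.mem_support]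
  have hncard : (Function.support f).ncard = S.card := by
    rw [hSsupp, Set.ncard_coe_finset]
  set n : ℕ := S.card with hn
  have hnk : (n : ℤ) ≤ b - a := by rw [← hncard]; exact hcon
  -- Key Fourier vanishing on consecutive powers
  have key : ∀ m : ℤ, a ≤ m → m < b →
      ∑ y ∈ S, f y * w ^ (m * (y.val : ℤ)) = 0 := by
    intro m hma hmb
    have h0 := hvanish ((m : ZMod N)) ⟨m, hma, hmb, rfl⟩
    rw [dftFun] at h0
    have hsqrt : ((Real.sqrt N : ℝ) : ℂ)⁻¹ ≠ 0 := by
      simp only [ne_eq, inv_eq_zero, Complex.ofReal_eq_zero]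
      positivity
    rw [Complex.ofReal_inv] at h0
    have hsum : ∑ x ∈ Finset.range N,
        f (x : ZMod N) * Complex.exp (-(2 * Real.pi * Complex.I) *
          (((((m : ZMod N)).val : ℝ) : ℂ) * ((x : ℝ) : ℂ)) / N) = 0 := by
      exact (mul_eq_zero.mp h0).resolve_left hsqrt
    -- rewrite each term as a power of w
    set ξ : ZMod N := (m : ZMod N) with hξ
    obtain ⟨t, ht⟩ : (N : ℤ) ∣ (ξ.val : ℤ) - m := by
      rw [← ZMod.intCast_zmod_eq_zero_iff_dvd]
      push_cast
      simp [hξ, ZMod.natCast_val, ZMod.intCast_cast, ZMod.intCast_zmod_cast]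
    have hterm : ∀ x : ℕ, Complex.exp (-(2 * Real.pi * Complex.I) *
        (((ξ.val : ℝ) : ℂ) * ((x : ℝ) : ℂ)) / N) = w ^ (m * (x : ℤ)) := by
      intro x
      have hzpow : w ^ (m * (x : ℤ)) =
          Complex.exp (((m * (x : ℤ) : ℤ) : ℂ) * (-(2 * Real.pi * Complex.I) / N)) := by
        rw [hw, ← Complex.exp_int_mul]
      rw [hzpow, Complex.exp_eq_exp_iff_exists_int]
      refine ⟨-(t * x), ?_⟩
      have hξval : ((ξ.val : ℤ) : ℂ) = (m : ℂ) + (N : ℂ) * (t : ℂ) := by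
        have : (ξ.val : ℤ) = m + N * t := by omega
        exact_mod_cast congrArg (Int.cast : ℤ → ℂ) this
      push_cast at hξval ⊢
      rw [hξval]
      field_simp
      ring
    rw [Finset.sum_congr rfl (fun x _ => by rw [hterm x])] at hsum
    -- reindex from range N to ZMod N
    have hre : ∑ x ∈ Finset.range N, f (x : ZMod N) * w ^ (m * (x : ℤ)) =
        ∑ y : ZMod N, f y * w ^ (m * (y.val : ℤ)) := by
      refine Finset.sum_nbij' (fun x => (x : ZMod N)) (fun y => y.val) ?_ ?_ ?_ ?_ ?_
      · intro x hx; exact Finset.mem_univ _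
      · intro y hy; exact Finset.mem_range.mpr (ZMod.val_lt y)
      · intro x hx
        exact ZMod.val_natCast_of_lt (Finset.mem_range.mp hx)
      · intro y hy; simp [ZMod.natCast_val, ZMod.cast_id]
      · intro x hx
        rw [ZMod.val_natCast_of_lt (Finset.mem_range.mp hx)]
    rw [hre] at hsum
    rw [← hsum]
    apply Finset.sum_subset (Finset.subset_univ S)
    intro y _ hyS
    have : f y = 0 := by
      by_contra hfy
      exact hyS (Finset.mem_filter.mpr ⟨Finset.mem_univ _, hfy⟩)
    simp [this]
  -- set up Vandermonde
  set e : Fin n → S := fun i => (S.equivFin).symm i with he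
  have he_inj : Function.Injective e := fun i j hij => (S.equivFin).symm.injective hij
  set z : Fin n → ℂ := fun i => w ^ ((e i : ZMod N)).val with hz
  have hz_inj : Function.Injective z := by
    intro i j hij
    apply he_inj
    have := hprim.pow_inj (ZMod.val_lt ((e i : ZMod N))) (ZMod.val_lt ((e j : ZMod N))) hij
    exact Subtype.ext (ZMod.val_injective _ this)
  set c : Fin n → ℂ := fun i => f (e i) * w ^ (a * (((e i : ZMod N)).val : ℤ)) with hc
  have hmv : Matrix.mulVec (Matrix.vandermonde z).transpose c = 0 := by
    funext j
    have hm : a ≤ a + (j : ℤ) := by omega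
    have hm' : a + (j : ℤ) < b := by
      have : ((j : ℕ) : ℤ) < n := by exact_mod_cast j.isLt
      omega
    have hkey := key (a + j) hm hm'
    -- reindex sum over S to Fin n
    have hsum2 : ∑ i : Fin n, f (e i) * w ^ ((a + (j : ℤ)) * (((e i : ZMod N)).val : ℤ)) = 0 := by
      rw [← hkey]
      rw [← Finset.sum_attach S (fun y => f y * w ^ ((a + (j : ℤ)) * ((y.val : ℤ))))]
      exact Fintype.sum_equiv (S.equivFin).symm _ _ (fun i => rfl)
    rw [Matrix.mulVec, Pi.zero_apply, ← hsum2]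
    apply Finset.sum_congr rfl
    intro i _
    simp only [Matrix.transpose_apply, Matrix.vandermonde_apply, hz, hc, dotProduct]
    rw [add_mul, zpow_add₀ hw_ne, mul_comm (j : ℤ) _]
    have : w ^ ((((e i : ZMod N)).val : ℤ) * (j : ℤ)) = (w ^ (((e i : ZMod N)).val)) ^ (j : ℕ) := by
      rw [← zpow_natCast (w ^ (((e i : ZMod N)).val)), ← zpow_natCast w, ← zpow_mul]
    rw [this]
    ring
  have hdet : Matrix.det (Matrix.vandermonde z).transpose ≠ 0 := by
    rw [Matrix.det_transpose]
    exact (Matrix.det_vandermonde_ne_zero_iff).mpr hz_inj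
  have hc0 : c = 0 := Matrix.eq_zero_of_mulVec_eq_zero hdet hmv
  -- contradiction: pick y in the support
  obtain ⟨y, hy⟩ : ∃ y, f y ≠ 0 := Function.ne_iff.mp hf
  have hyS : y ∈ S := Finset.mem_filter.mpr ⟨Finset.mem_univ _, hy⟩
  set i : Fin n := S.equivFin ⟨y, hyS⟩ with hi
  have hei : (e i : ZMod N) = y := by
    simp [he, hi]
  have hci : c i = 0 := by rw [hc0]; rfl
  have h2 : f y * w ^ (a * (y.val : ℤ)) = 0 := by
    have : c i = f (e i) * w ^ (a * (((e i : ZMod N)).val : ℤ)) := rfl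
    rw [this, hei] at hci
    exact hci
  rcases mul_eq_zero.mp h2 with h1 | h2
  · exact hy h1
  · exact (zpow_ne_zero _ hw_ne) h2
end
end

section
/- Let a, b be coprime integers, not both zero, and set v = (a,b). Then for every p, q ∈ 𝕋², the distance from q to the coset ℝv + p satisfies d(q, ℝv + p) ≤ 1/max(|a|, |b|), where d is the ℓ^∞ distance on 𝕋². -/
noncomputable section

lemma coe_int_zero (k : ℤ) : ((k : ℝ) : AddCircle (1 : ℝ)) = 0 := by
  rw [AddCircle.coe_eq_zero_iff]
  exact ⟨k, by simp⟩

lemma coe_add_int (x : ℝ) (k : ℤ) :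
    ((x + (k : ℝ) : ℝ) : AddCircle (1 : ℝ)) = (x : AddCircle (1 : ℝ)) := by
  rw [AddCircle.coe_add, coe_int_zero, add_zero]

lemma key (a b : ℤ) (ha : a ≠ 0) (h : IsCoprime a b) (x y : ℝ) :
    ∃ t : ℝ, ((t * (a : ℝ) : ℝ) : AddCircle (1 : ℝ)) = (x : AddCircle (1 : ℝ)) ∧
      dist ((t * (b : ℝ) : ℝ) : AddCircle (1 : ℝ)) (y : AddCircle (1 : ℝ))
        ≤ 1 / (2 * |(a : ℝ)|) := by
  obtain ⟨u, v, huv⟩ := h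
  have hA : (a : ℝ) ≠ 0 := Int.cast_ne_zero.mpr ha
  have hApos : 0 < |(a : ℝ)| := abs_pos.mpr hA
  set c : ℝ := y - x * b / a with hc
  set n : ℤ := round (c * a) with hn
  refine ⟨(x + (n * v : ℤ)) / a, ?_, ?_⟩
  · have : (x + (n * v : ℤ)) / a * a = x + ((n * v : ℤ) : ℝ) := by field_simp
    rw [this, coe_add_int]
  · have hbz : ((n * v : ℤ) : ℝ) * b = (n : ℝ) - ((n * u : ℤ) : ℝ) * a := by
      have : (u : ℝ) * a + (v : ℝ) * b = 1 := by exact_mod_cast congrArg (Int.cast : ℤ → ℝ) huv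
      push_cast
      linear_combination (n:ℝ) * this
    have hac : (a:ℝ) * c = (a:ℝ) * y - x * b := by
      rw [hc]; field_simp
    have ht : (x + (n * v : ℤ)) / a * b - y = ((n : ℝ) / a - c) + (-(n * u) : ℤ) := by
      push_cast
      push_cast at hbz
      field_simp
      linear_combination hbz + hac
    have hsmall : |(n : ℝ) / a - c| ≤ 1 / (2 * |(a : ℝ)|) := by
      have h1 : |c * a - n| ≤ 1 / 2 := abs_sub_round (c * a)
      have : (n : ℝ) / a - c = -((c * a - n) / a) := by field_simp; ring
      rw [this, abs_neg, abs_div]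
      rw [div_le_div_iff₀ hApos (by positivity)]
      calc |c * a - (n:ℝ)| * (2 * |(a:ℝ)|) ≤ (1/2) * (2 * |(a:ℝ)|) := by
            apply mul_le_mul_of_nonneg_right h1 (by positivity)
        _ = 1 * |(a:ℝ)| := by ring
    have hle : 1 / (2 * |(a : ℝ)|) ≤ |(1:ℝ)| / 2 := by
      rw [abs_one]
      rw [div_le_div_iff₀ (by positivity) (by norm_num)]
      have : (1:ℝ) ≤ |(a:ℝ)| := by
        have := Int.one_le_abs ha
        calc (1:ℝ) ≤ |(a:ℤ)| := by exact_mod_cast this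
          _ = |(a:ℝ)| := by push_cast; ring
      linarith
    rw [dist_eq_norm, ← AddCircle.coe_sub, ht, coe_add_int]
    rw [(AddCircle.norm_coe_eq_abs_iff (1:ℝ) (by norm_num)).mpr (hsmall.trans hle)]
    exact hsmall

/-- **Quantitative density of lines with coprime integer direction.** If
`a, b` are coprime integers (so not both zero), then every point of `𝕋²` is within
`ℓ^∞` distance `1/max(|a|,|b|)` of every coset `ℝ(a,b) + p`. -/
theorem line_quantitatively_dense (a b : ℤ) (hab : Int.gcd a b = 1) (p q : T2) :
    Metric.infDist q (lineT2 ((a : ℝ), (b : ℝ)) p) ≤ 1 / (max a.natAbs b.natAbs : ℝ) := by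
  obtain ⟨x, hx⟩ := QuotientAddGroup.mk_surjective (q.1 - p.1)
  obtain ⟨y, hy⟩ := QuotientAddGroup.mk_surjective (q.2 - p.2)
  have hq1 : q.1 = (x : AddCircle (1:ℝ)) + p.1 := by rw [hx]; abel
  have hq2 : q.2 = (y : AddCircle (1:ℝ)) + p.2 := by rw [hy]; abel
  have hcop : IsCoprime a b := Int.isCoprime_iff_gcd_eq_one.mpr hab
  have hM1 : 1 ≤ max a.natAbs b.natAbs := by
    rcases Nat.eq_zero_or_pos (max a.natAbs b.natAbs) with h | h
    · exfalso
      have ha0 : a.natAbs = 0 := Nat.le_zero.mp (le_max_left _ _ |>.trans h.le)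
      have hb0 : b.natAbs = 0 := Nat.le_zero.mp (le_max_right _ _ |>.trans h.le)
      rw [Int.natAbs_eq_zero] at ha0 hb0
      simp [ha0, hb0] at hab
    · exact h
  rcases le_total b.natAbs a.natAbs with hmax | hmax
  · -- a is the max
    have hM : max a.natAbs b.natAbs = a.natAbs := max_eq_left hmax
    have ha : a ≠ 0 := by
      intro h; rw [h] at hM; simp at hM; omega
    obtain ⟨t, h1, h2⟩ := key a b ha hcop x y
    have hmem : (((t * (a:ℝ) : ℝ) : AddCircle (1:ℝ)) + p.1,
                 ((t * (b:ℝ) : ℝ) : AddCircle (1:ℝ)) + p.2) ∈ lineT2 ((a:ℝ), (b:ℝ)) p :=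
      ⟨t, rfl⟩
    refine (Metric.infDist_le_dist_of_mem hmem).trans ?_
    rw [Prod.dist_eq]
    rw [max_eq_left (show ((b.natAbs:ℕ):ℝ) ≤ ((a.natAbs:ℕ):ℝ) by exact_mod_cast hmax)]
    have hcast : (a.natAbs : ℝ) = |(a:ℝ)| := by
      rw [Nat.cast_natAbs]; push_cast; ring
    apply max_le
    · rw [hq1, h1]
      simp
      try positivity
    · rw [hq2]
      have : dist ((y : AddCircle (1:ℝ)) + p.2) (((t * (b:ℝ) : ℝ) : AddCircle (1:ℝ)) + p.2)
          = dist ((y : AddCircle (1:ℝ))) (((t * (b:ℝ) : ℝ) : AddCircle (1:ℝ))) :=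
        dist_add_right _ _ _
      rw [this, dist_comm]
      refine h2.trans ?_
      rw [hcast]
      rw [div_le_div_iff₀ (by positivity) (by positivity)]
      nlinarith [abs_nonneg (a:ℝ)]
  · -- b is the max
    have hM : max a.natAbs b.natAbs = b.natAbs := max_eq_right hmax
    have hb : b ≠ 0 := by
      intro h; rw [h] at hM; simp at hM; omega
    obtain ⟨t, h1, h2⟩ := key b a hb hcop.symm y x
    have hmem : (((t * (a:ℝ) : ℝ) : AddCircle (1:ℝ)) + p.1,
                 ((t * (b:ℝ) : ℝ) : AddCircle (1:ℝ)) + p.2) ∈ lineT2 ((a:ℝ), (b:ℝ)) p :=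
      ⟨t, rfl⟩
    refine (Metric.infDist_le_dist_of_mem hmem).trans ?_
    rw [Prod.dist_eq]
    rw [max_eq_right (show ((a.natAbs:ℕ):ℝ) ≤ ((b.natAbs:ℕ):ℝ) by exact_mod_cast hmax)]
    have hcast : (b.natAbs : ℝ) = |(b:ℝ)| := by
      rw [Nat.cast_natAbs]; push_cast; ring
    apply max_le
    · rw [hq1]
      have : dist ((x : AddCircle (1:ℝ)) + p.1) (((t * (a:ℝ) : ℝ) : AddCircle (1:ℝ)) + p.1)
          = dist ((x : AddCircle (1:ℝ))) (((t * (a:ℝ) : ℝ) : AddCircle (1:ℝ))) :=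
        dist_add_right _ _ _
      rw [this, dist_comm]
      refine h2.trans ?_
      rw [hcast]
      rw [div_le_div_iff₀ (by positivity) (by positivity)]
      nlinarith [abs_nonneg (b:ℝ)]
    · rw [hq2, h1]
      simp
      try positivity
end
end

section
/- Let ζ ∈ ℂ be a root of unity. Then exactly one of the three numbers −ζ, ζ², −ζ² is Galois conjugate to ζ over ℚ, i.e., is a root of the minimal polynomial of ζ over ℚ. -/
/-!
The conjugates over `ℚ` of a root of unity `ζ` of order `n` are the roots of the irreducible
cyclotomic polynomial `Φₙ`, i.e. the primitive `n`-th roots of unity. If `n` is odd, `ζ²` is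
primitive, while `(-ζ)ⁿ = (-ζ²)ⁿ = -1`. If `n = 2m`, then `ζ ^ m = -1`, so `-ζ = ζ ^ (m + 1)` and
`-ζ² = ζ ^ (m + 2)`, whereas `ζ²` has order `m`; exactly one of `m + 1`, `m + 2` is odd, and that
one is coprime to `2m`.
-/

open Polynomial

theorem Nat.coprime_add_one_two_mul_iff (m : ℕ) : (m + 1).Coprime (2 * m) ↔ Even m := by
  rw [Nat.coprime_mul_iff_right, Nat.coprime_two_right, Nat.odd_add_one, Nat.not_odd_iff_even,
    Nat.coprime_self_add_left]
  simp

theorem Nat.coprime_add_two_two_mul_iff (m : ℕ) : (m + 2).Coprime (2 * m) ↔ Odd m := by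
  rw [Nat.coprime_mul_iff_right, Nat.coprime_two_right, Nat.coprime_self_add_left,
    Nat.coprime_two_left]
  simp [Nat.odd_add]

theorem aeval_minpoly_rat_eq_zero_iff {K : Type*} [Field K] [CharZero K] {ζ : K} {n : ℕ}
    (h : IsPrimitiveRoot ζ n) (hn : 0 < n) (x : K) :
    aeval x (minpoly ℚ ζ) = 0 ↔ IsPrimitiveRoot x n := by
  rw [← cyclotomic_eq_minpoly_rat h hn, aeval_def, eval₂_eq_eval_map, map_cyclotomic,
    ← IsRoot.def, isRoot_cyclotomic_iff_charZero hn]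

namespace IsPrimitiveRoot

variable {R : Type*} [CommRing R] {ζ : R} {n m : ℕ}

theorem not_neg_of_odd [Nontrivial R] (hR : ringChar R ≠ 2) (hn : Odd n) {x : R}
    (hx : x ^ n = 1) : ¬IsPrimitiveRoot (-x) n := fun h ↦
  Ring.neg_one_ne_one_of_char_ne_two hR <| by simpa [hn.neg_pow, hx] using h.pow_eq_one

theorem pow_two_of_odd (h : IsPrimitiveRoot ζ n) (hn : Odd n) : IsPrimitiveRoot (ζ ^ 2) n :=
  h.pow_of_coprime 2 (Nat.coprime_two_left.2 hn)

theorem not_pow_two_of_two_mul (h : IsPrimitiveRoot ζ (2 * m)) (hm : 0 < m) :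
    ¬IsPrimitiveRoot (ζ ^ 2) (2 * m) := by
  rw [h.pow_iff_coprime (by omega), Nat.coprime_two_left, Nat.not_odd_iff_even]
  exact even_two_mul m

theorem pow_eq_neg_one_of_two_mul [IsDomain R] (h : IsPrimitiveRoot ζ (2 * m)) (hm : 0 < m) :
    ζ ^ m = -1 :=
  eq_neg_one_of_two_right <| by
    simpa [hm.ne'] using h.pow_of_dvd hm.ne' (dvd_mul_left m 2)

theorem neg_pow_iff_coprime [IsDomain R] (h : IsPrimitiveRoot ζ (2 * m)) (hm : 0 < m) (k : ℕ) :
    IsPrimitiveRoot (-ζ ^ k) (2 * m) ↔ (m + k).Coprime (2 * m) := by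
  rw [← h.pow_iff_coprime (by omega), pow_add, h.pow_eq_neg_one_of_two_mul hm, neg_one_mul]

theorem exactly_one_neg_sq_neg_sq [IsDomain R] (hR : ringChar R ≠ 2) (h : IsPrimitiveRoot ζ n)
    (hn : 0 < n) :
    (IsPrimitiveRoot (-ζ) n ∧ ¬IsPrimitiveRoot (ζ ^ 2) n ∧ ¬IsPrimitiveRoot (-ζ ^ 2) n) ∨
    (¬IsPrimitiveRoot (-ζ) n ∧ IsPrimitiveRoot (ζ ^ 2) n ∧ ¬IsPrimitiveRoot (-ζ ^ 2) n) ∨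
    (¬IsPrimitiveRoot (-ζ) n ∧ ¬IsPrimitiveRoot (ζ ^ 2) n ∧ IsPrimitiveRoot (-ζ ^ 2) n) := by
  obtain ⟨m, rfl | rfl⟩ := Nat.even_or_odd' n
  · have hm : 0 < m := by omega
    have hneg : IsPrimitiveRoot (-ζ) (2 * m) ↔ Even m := by
      simpa only [pow_one, Nat.coprime_add_one_two_mul_iff] using h.neg_pow_iff_coprime hm 1
    rw [hneg, h.neg_pow_iff_coprime hm 2, Nat.coprime_add_two_two_mul_iff, ← Nat.not_even_iff_odd]
    have := h.not_pow_two_of_two_mul hm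
    tauto
  · have hodd : Odd (2 * m + 1) := odd_two_mul_add_one m
    refine Or.inr <| Or.inl ⟨not_neg_of_odd hR hodd h.pow_eq_one, h.pow_two_of_odd hodd,
      not_neg_of_odd hR hodd ?_⟩
    rw [pow_right_comm, h.pow_eq_one, one_pow]

end IsPrimitiveRoot

/-- **Beukers–Smyth, Lemma 1.** If `ζ` is a root of unity, then exactly one of the
three numbers `-ζ`, `ζ²`, `-ζ²` is Galois conjugate to `ζ` over `ℚ`, i.e. is a root
of the minimal polynomial of `ζ` over `ℚ`. -/
theorem root_of_unity_conjugate (ζ : ℂ) (hζ : ∃ n : ℕ, 1 ≤ n ∧ ζ ^ n = 1) :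
    (Polynomial.aeval (-ζ) (minpoly ℚ ζ) = 0 ∧
      ¬ Polynomial.aeval (ζ ^ 2) (minpoly ℚ ζ) = 0 ∧
      ¬ Polynomial.aeval (-ζ ^ 2) (minpoly ℚ ζ) = 0) ∨
    (¬ Polynomial.aeval (-ζ) (minpoly ℚ ζ) = 0 ∧
      Polynomial.aeval (ζ ^ 2) (minpoly ℚ ζ) = 0 ∧
      ¬ Polynomial.aeval (-ζ ^ 2) (minpoly ℚ ζ) = 0) ∨
    (¬ Polynomial.aeval (-ζ) (minpoly ℚ ζ) = 0 ∧
      ¬ Polynomial.aeval (ζ ^ 2) (minpoly ℚ ζ) = 0 ∧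
      Polynomial.aeval (-ζ ^ 2) (minpoly ℚ ζ) = 0) := by
  obtain ⟨n, hn, hζn⟩ := hζ
  have hord : 0 < orderOf ζ := (isOfFinOrder_iff_pow_eq_one.2 ⟨n, hn, hζn⟩).orderOf_pos
  have hprim := IsPrimitiveRoot.orderOf ζ
  simp only [aeval_minpoly_rat_eq_zero_iff hprim hord]
  exact hprim.exactly_one_neg_sq_neg_sq (by simp [ringChar.eq_zero]) hord
end
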